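/- arXiv:2512.16505 — 5 statements merged into one kernel-verified Lean document; each statement's English description precedes it below -/
import Mathlib

section
/- (Mass conservation in Lagrangian coordinates) Let d ≥ 1, let ξ : ℝ^d × [0,∞) → ℝ^d be a flow with V = ∂_t ξ, ∇_y ξ(y,t) invertible and differentiable in t, and set 𝒥 = det∇_y ξ and B = ((∇_y ξ)^{-1})^⊤. Suppose π : ℝ^d × [0,∞) → ℝ is differentiable in t and satisfies the Lagrangian continuity equation ∂_t π + π ∑_{k,j} B_{kj} ∂_{y_j} V_k = 0. Then ∂_t(π 𝒥) = 0; in particular, if π(y,0)·𝒥(y,0) = 1 for all y, then π(y,t) = 𝒥(y,t)^{−1} for all (y,t). -/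
noncomputable section
open Matrix

abbrev Rd (d : ℕ) : Type := EuclideanSpace ℝ (Fin d)

/-- Partial derivative of `f` in the `j`-th coordinate direction. -/
def pd {d : ℕ} {E : Type*} [NormedAddCommGroup E] [NormedSpace ℝ E]
    (j : Fin d) (f : Rd d → E) : Rd d → E :=
  fun y => fderiv ℝ f y (EuclideanSpace.single j 1)

/-- Jacobian matrix `(∇f)_{ij} = ∂_j f_i` of a map `ℝ^d → ℝ^d`. -/
def Jac {d : ℕ} (f : Rd d → Rd d) (y : Rd d) : Matrix (Fin d) (Fin d) ℝ :=
  Matrix.of fun i j => pd j (fun z => f z i) y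

open Finset in
lemma det_updateColumn_expand {d : ℕ} (A : Matrix (Fin d) (Fin d) ℝ) (i : Fin d)
    (b : Fin d → ℝ) :
    (A.updateCol i b).det =
      ∑ σ : Equiv.Perm (Fin d), ((Equiv.Perm.sign σ : ℤ) : ℝ) *
        (b (σ i) * ∏ j ∈ univ.erase i, A (σ j) j) := by
  rw [Matrix.det_apply']
  refine Finset.sum_congr rfl fun σ _ => ?_
  congr 1
  rw [← Finset.mul_prod_erase univ _ (mem_univ i), Matrix.updateCol_self]
  congr 1
  refine Finset.prod_congr rfl fun j hj => ?_
  exact Matrix.updateCol_ne (Finset.ne_of_mem_erase hj)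

open Finset in
/-- Derivative of the determinant of a matrix-valued function of one variable. -/
lemma hasDerivAt_det_aux {d : ℕ} (A : ℝ → Matrix (Fin d) (Fin d) ℝ)
    (A' : Matrix (Fin d) (Fin d) ℝ) (t : ℝ)
    (h : ∀ i j, HasDerivAt (fun s => A s i j) (A' i j) t) :
    HasDerivAt (fun s => (A s).det)
      (∑ i, ((A t).updateCol i (fun k => A' k i)).det) t := by
  have hD : HasDerivAt (fun s => (A s).det)
      (∑ σ : Equiv.Perm (Fin d), ((Equiv.Perm.sign σ : ℤ) : ℝ) *
        ∑ i, (∏ j ∈ univ.erase i, A t (σ j) j) * A' (σ i) i) t := by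
    have hrw : (fun s => (A s).det) =
        fun s => ∑ σ : Equiv.Perm (Fin d), ((Equiv.Perm.sign σ : ℤ) : ℝ) *
          ∏ i, A s (σ i) i := by
      funext s; exact Matrix.det_apply' (A s)
    rw [hrw]
    refine HasDerivAt.fun_sum fun σ _ => ?_
    have hp : HasDerivAt (fun s => ∏ i, A s (σ i) i)
        (∑ i, (∏ j ∈ univ.erase i, A t (σ j) j) • A' (σ i) i) t :=
      HasDerivAt.fun_finsetProd (fun i _ => h (σ i) i)
    simpa [smul_eq_mul, Finset.mul_sum] using hp.const_mul ((Equiv.Perm.sign σ : ℤ) : ℝ)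
  convert hD using 1
  calc ∑ i, ((A t).updateCol i (fun k => A' k i)).det
      = ∑ i, ∑ σ : Equiv.Perm (Fin d), ((Equiv.Perm.sign σ : ℤ) : ℝ) *
          (A' (σ i) i * ∏ j ∈ univ.erase i, A t (σ j) j) :=
        Finset.sum_congr rfl fun i _ => det_updateColumn_expand _ _ _
    _ = ∑ σ : Equiv.Perm (Fin d), ∑ i, ((Equiv.Perm.sign σ : ℤ) : ℝ) *
          (A' (σ i) i * ∏ j ∈ univ.erase i, A t (σ j) j) := Finset.sum_comm
    _ = _ := by
        refine Finset.sum_congr rfl fun σ _ => ?_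
        rw [Finset.mul_sum]
        exact Finset.sum_congr rfl fun i _ => by ring

/-- Jacobi's formula for invertible matrices. -/
lemma sum_det_updateColumn_eq {d : ℕ} (A A' : Matrix (Fin d) (Fin d) ℝ)
    (hA : A.det ≠ 0) :
    (∑ i, (A.updateCol i (fun k => A' k i)).det) =
      A.det * ∑ k, ∑ j, (A⁻¹)ᵀ k j * A' k j := by
  have hadj : ∀ i k, A.adjugate i k = A.det * A⁻¹ i k := by
    intro i k
    rw [Matrix.inv_def, Ring.inverse_eq_inv']
    simp [Matrix.smul_apply, smul_eq_mul]
    field_simp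
  calc (∑ i, (A.updateCol i (fun k => A' k i)).det)
      = ∑ i, Matrix.cramer A (fun k => A' k i) i :=
        Finset.sum_congr rfl fun i _ => (Matrix.cramer_apply _ _ _).symm
    _ = ∑ i, ∑ k, A.adjugate i k * A' k i := by
        refine Finset.sum_congr rfl fun i _ => ?_
        rw [Matrix.cramer_eq_adjugate_mulVec]
        rfl
    _ = A.det * ∑ k, ∑ j, (A⁻¹)ᵀ k j * A' k j := by
        rw [Finset.mul_sum, Finset.sum_comm]
        refine Finset.sum_congr rfl fun k _ => ?_
        rw [Finset.mul_sum]
        refine Finset.sum_congr rfl fun i _ => ?_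
        rw [hadj, Matrix.transpose_apply]
        ring

/-- Mass conservation in Lagrangian coordinates: if `π` satisfies the Lagrangian continuity
equation `∂_t π + π ∑_{k,j} B_{kj} ∂_j V_k = 0` along a flow `ξ` with `V = ∂_t ξ`, then
`∂_t (π 𝒥) = 0`; in particular `π(y,0)𝒥(y,0) = 1` forces `π = 𝒥⁻¹`. -/
theorem mass_conservation_lagrangian (d : ℕ) (hd : 1 ≤ d)
    (ξ V : ℝ → Rd d → Rd d) (π : ℝ → Rd d → ℝ)
    (hV : ∀ t : ℝ, 0 ≤ t → ∀ y : Rd d, HasDerivAt (fun s => ξ s y) (V t y) t)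
    (hinv : ∀ t : ℝ, 0 ≤ t → ∀ y : Rd d, (Jac (ξ t) y).det ≠ 0)
    (hcomm : ∀ t : ℝ, 0 ≤ t → ∀ y : Rd d, ∀ i j : Fin d,
      HasDerivAt (fun s => Jac (ξ s) y i j) (pd j (fun z => V t z i) y) t)
    (hcont : ∀ t : ℝ, 0 ≤ t → ∀ y : Rd d,
      HasDerivAt (fun s => π s y)
        (-(π t y * ∑ k, ∑ j, ((Jac (ξ t) y)⁻¹)ᵀ k j * pd j (fun z => V t z k) y)) t) :
    (∀ t : ℝ, 0 ≤ t → ∀ y : Rd d,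
        HasDerivAt (fun s => π s y * (Jac (ξ s) y).det) 0 t) ∧
    ((∀ y : Rd d, π 0 y * (Jac (ξ 0) y).det = 1) →
      ∀ t : ℝ, 0 ≤ t → ∀ y : Rd d, π t y = ((Jac (ξ t) y).det)⁻¹) := by
  have main : ∀ t : ℝ, 0 ≤ t → ∀ y : Rd d,
      HasDerivAt (fun s => π s y * (Jac (ξ s) y).det) 0 t := by
    intro t ht y
    set S : ℝ := ∑ k, ∑ j, ((Jac (ξ t) y)⁻¹)ᵀ k j * pd j (fun z => V t z k) y with hS
    have hdet : HasDerivAt (fun s => (Jac (ξ s) y).det) ((Jac (ξ t) y).det * S) t := by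
      have := hasDerivAt_det_aux (fun s => Jac (ξ s) y)
        (Matrix.of fun i j => pd j (fun z => V t z i) y) t
        (fun i j => hcomm t ht y i j)
      rwa [sum_det_updateColumn_eq _ _ (hinv t ht y)] at this
    have := (hcont t ht y).fun_mul hdet
    refine this.congr_deriv ?_
    ring
  refine ⟨main, fun h0 t ht y => ?_⟩
  have hconst : π t y * (Jac (ξ t) y).det = π 0 y * (Jac (ξ 0) y).det := by
    have := constant_of_has_deriv_right_zero
      (f := fun s => π s y * (Jac (ξ s) y).det) (a := 0) (b := t)
      (fun x hx => ((main x hx.1 y).continuousAt).continuousWithinAt)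
      (fun x hx => ((main x hx.1 y).hasDerivWithinAt))
    exact this t ⟨ht, le_refl t⟩
  rw [h0 y] at hconst
  exact eq_inv_of_mul_eq_one_left hconst
end
end

section
/- (Propagation of the deformation gradient) Let d ≥ 1 and let ξ : ℝ^d × [0,∞) → ℝ^d be C¹ in time with V = ∂_t ξ, such that ∇_y ξ(y,t) exists, is invertible for all (y,t), and is C¹ in t, and V is differentiable in y. Set B = ((∇_y ξ)^{-1})^⊤. Suppose H : ℝ^d × [0,∞) → ℝ^{d×d} is C¹ in t and satisfies, for each fixed y, the linear ODE ∂_t H_{ij} = ∑_{k,l} B_{kl} ∂_{y_l} V_i · H_{kj} with initial condition H(y,0) = ∇_y ξ(y,0). Then H(y,t) = ∇_y ξ(y,t) for all (y,t). (Equivalently: ∂_t(B^⊤ H) = 0 along the flow.) -/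
noncomputable section
open Matrix

lemma differentiableAt_det_comp {d : ℕ} {F : ℝ → Matrix (Fin d) (Fin d) ℝ} {t : ℝ}
    (h : ∀ i j, DifferentiableAt ℝ (fun s => F s i j) t) :
    DifferentiableAt ℝ (fun s => (F s).det) t := by
  have he : (fun s => (F s).det)
      = fun s => ∑ σ : Equiv.Perm (Fin d), ((Equiv.Perm.sign σ : ℤ) : ℝ) * ∏ i, F s (σ i) i := by
    funext s; rw [Matrix.det_apply']
  rw [he]
  apply DifferentiableAt.fun_sum
  intro σ _
  apply DifferentiableAt.const_mul
  exact (HasFDerivAt.finset_prod (fun i _ => (h (σ i) i).hasFDerivAt)).differentiableAt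

lemma differentiableAt_inv_entry {d : ℕ} {F : ℝ → Matrix (Fin d) (Fin d) ℝ} {t : ℝ}
    (h : ∀ i j, DifferentiableAt ℝ (fun s => F s i j) t) (hdet : (F t).det ≠ 0) (i k : Fin d) :
    DifferentiableAt ℝ (fun s => (F s)⁻¹ i k) t := by
  have he : (fun s => (F s)⁻¹ i k) = fun s => ((F s).det)⁻¹ * (F s).adjugate i k := by
    funext s
    rw [Matrix.inv_def, Ring.inverse_eq_inv', Matrix.smul_apply, smul_eq_mul]
  rw [he]
  have hadj : DifferentiableAt ℝ (fun s => (F s).adjugate i k) t := by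
    have he2 : (fun s => (F s).adjugate i k)
        = fun s => ((F s).updateRow k (Pi.single i 1)).det := by
      funext s; rw [Matrix.adjugate_apply]
    rw [he2]
    apply differentiableAt_det_comp
    intro a b
    rcases eq_or_ne a k with rfl | hak
    · simp [Matrix.updateRow_apply]
    · simpa [Matrix.updateRow_apply, hak] using h a b
  exact ((differentiableAt_det_comp h).inv hdet).mul hadj

lemma key_ode {d : ℕ} (J A W : ℝ → Matrix (Fin d) (Fin d) ℝ)
    (hJd : ∀ u : ℝ, 0 ≤ u → ∀ i j, HasDerivAt (fun s => J s i j) (W u i j) u)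
    (hdet : ∀ u : ℝ, 0 ≤ u → (J u).det ≠ 0)
    (hAd : ∀ u : ℝ, 0 ≤ u → ∀ i j,
      HasDerivAt (fun s => A s i j) ((W u * ((J u)⁻¹ * A u)) i j) u)
    (hA0 : A 0 = J 0) : ∀ t : ℝ, 0 ≤ t → A t = J t := by
  intro t ht
  have hunit : ∀ u : ℝ, 0 ≤ u → IsUnit (J u).det := fun u hu =>
    isUnit_iff_ne_zero.mpr (hdet u hu)
  -- entrywise differentiability of the inverse
  have hInvD : ∀ u : ℝ, 0 ≤ u → ∀ i k, DifferentiableAt ℝ (fun s => (J s)⁻¹ i k) u :=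
    fun u hu i k => differentiableAt_inv_entry
      (fun i j => (hJd u hu i j).differentiableAt) (hdet u hu) i k
  -- G u = derivative-within of the inverse entries
  set G : ℝ → Matrix (Fin d) (Fin d) ℝ :=
    fun u => Matrix.of fun i k => derivWithin (fun s => (J s)⁻¹ i k) (Set.Ici 0) u with hGdef
  have hGd : ∀ u : ℝ, 0 ≤ u → ∀ i k,
      HasDerivWithinAt (fun s => (J s)⁻¹ i k) (G u i k) (Set.Ici 0) u :=
    fun u hu i k => ((hInvD u hu i k).differentiableWithinAt).hasDerivWithinAt
  -- the relation W·J⁻¹ + J·G = 0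
  have hrel : ∀ u : ℝ, 0 ≤ u → W u * (J u)⁻¹ + J u * G u = 0 := by
    intro u hu
    ext i k
    have h1 : HasDerivWithinAt (fun s => ∑ b, J s i b * (J s)⁻¹ b k)
        (∑ b, (W u i b * (J u)⁻¹ b k + J u i b * G u b k)) (Set.Ici 0) u :=
      HasDerivWithinAt.fun_sum fun b _ => ((hJd u hu i b).hasDerivWithinAt).mul (hGd u hu b k)
    have h2 : ∀ s ∈ Set.Ici (0:ℝ), ∑ b, J s i b * (J s)⁻¹ b k = (1 : Matrix (Fin d) (Fin d) ℝ) i k := by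
      intro s hs
      rw [← Matrix.mul_apply, Matrix.mul_nonsing_inv _ (hunit s hs)]
    have h3 : HasDerivWithinAt (fun s => ∑ b, J s i b * (J s)⁻¹ b k) 0 (Set.Ici 0) u :=
      (hasDerivWithinAt_const u (Set.Ici 0) ((1 : Matrix (Fin d) (Fin d) ℝ) i k)).congr h2 (h2 u hu)
    have h4 := UniqueDiffWithinAt.eq_deriv (Set.Ici 0) (uniqueDiffOn_Ici 0 u hu) h1 h3
    simp only [Matrix.add_apply, Matrix.mul_apply, Matrix.zero_apply, ← Finset.sum_add_distrib]
    exact h4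
  have hGeq : ∀ u : ℝ, 0 ≤ u → G u = -((J u)⁻¹ * W u * (J u)⁻¹) := by
    intro u hu
    have hJG : J u * G u = -(W u * (J u)⁻¹) :=
      eq_neg_of_add_eq_zero_right (hrel u hu)
    calc G u = ((J u)⁻¹ * J u) * G u := by
              rw [Matrix.nonsing_inv_mul _ (hunit u hu), one_mul]
      _ = (J u)⁻¹ * (J u * G u) := by rw [Matrix.mul_assoc]
      _ = -((J u)⁻¹ * W u * (J u)⁻¹) := by rw [hJG]; noncomm_ring
  -- the function s ↦ (J s)⁻¹ * A s has zero right-derivative on [0,∞)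
  have hzero : ∀ u : ℝ, 0 ≤ u → ∀ i j,
      HasDerivWithinAt (fun s => ∑ k, (J s)⁻¹ i k * A s k j) 0 (Set.Ici 0) u := by
    intro u hu i j
    have h1 : HasDerivWithinAt (fun s => ∑ k, (J s)⁻¹ i k * A s k j)
        (∑ k, (G u i k * A u k j + (J u)⁻¹ i k * (W u * ((J u)⁻¹ * A u)) k j))
        (Set.Ici 0) u :=
      HasDerivWithinAt.fun_sum fun k _ => (hGd u hu i k).mul (hAd u hu k j).hasDerivWithinAt
    have h2 : ∑ k, (G u i k * A u k j + (J u)⁻¹ i k * (W u * ((J u)⁻¹ * A u)) k j)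
        = (G u * A u + (J u)⁻¹ * (W u * ((J u)⁻¹ * A u))) i j := by
      simp [Matrix.add_apply, Matrix.mul_apply, Finset.sum_add_distrib]
    have h3 : G u * A u + (J u)⁻¹ * (W u * ((J u)⁻¹ * A u)) = 0 := by
      rw [hGeq u hu]; noncomm_ring
    rw [h2, h3] at h1
    simpa using h1
  -- constancy
  have hconst : ∀ i j, (∑ k, (J t)⁻¹ i k * A t k j) = (∑ k, (J 0)⁻¹ i k * A 0 k j) := by
    intro i j
    refine constant_of_has_deriv_right_zero (f := fun s => ∑ k, (J s)⁻¹ i k * A s k j)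
      (a := 0) (b := t) ?_ ?_ t (Set.mem_Icc.mpr ⟨ht, le_refl t⟩)
    · intro u hu
      exact ((hzero u hu.1 i j).continuousWithinAt).mono Set.Icc_subset_Ici_self
    · intro u hu
      exact (hzero u hu.1 i j).mono (Set.Ici_subset_Ici.mpr hu.1)
  have hone : (J t)⁻¹ * A t = 1 := by
    ext i j
    rw [Matrix.mul_apply, hconst i j]
    rw [show (∑ k, (J 0)⁻¹ i k * A 0 k j) = ((J 0)⁻¹ * A 0) i j from (Matrix.mul_apply).symm,
      hA0, Matrix.nonsing_inv_mul _ (hunit 0 le_rfl)]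
  calc A t = ((J t) * (J t)⁻¹) * A t := by
        rw [Matrix.mul_nonsing_inv _ (hunit t ht), one_mul]
    _ = J t * ((J t)⁻¹ * A t) := by rw [Matrix.mul_assoc]
    _ = J t := by rw [hone, mul_one]

/-- Propagation of the deformation gradient: if `H` solves the linear ODE
`∂_t H_{ij} = ∑_{k,l} B_{kl} ∂_l V_i · H_{kj}` along the flow `ξ` (with `V = ∂_t ξ`,
`B = ((∇_yξ)⁻¹)ᵀ`) and `H(·,0) = ∇_y ξ(·,0)`, then `H(·,t) = ∇_y ξ(·,t)` for all `t ≥ 0`. -/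
theorem deformation_gradient_propagation (d : ℕ) (hd : 1 ≤ d)
    (ξ V : ℝ → Rd d → Rd d)
    (hV : ∀ t : ℝ, 0 ≤ t → ∀ y : Rd d, HasDerivAt (fun s => ξ s y) (V t y) t)
    (hinv : ∀ t : ℝ, 0 ≤ t → ∀ y : Rd d, (Jac (ξ t) y).det ≠ 0)
    (hcomm : ∀ t : ℝ, 0 ≤ t → ∀ y : Rd d, ∀ i j : Fin d,
      HasDerivAt (fun s => Jac (ξ s) y i j) (pd j (fun z => V t z i) y) t)
    (H : ℝ → Rd d → Matrix (Fin d) (Fin d) ℝ)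
    (hH : ∀ t : ℝ, 0 ≤ t → ∀ y : Rd d, ∀ i j : Fin d,
      HasDerivAt (fun s => H s y i j)
        (∑ k, ∑ l, ((Jac (ξ t) y)⁻¹)ᵀ k l * pd l (fun z => V t z i) y * H t y k j) t)
    (hH0 : ∀ y : Rd d, H 0 y = Jac (ξ 0) y) :
    ∀ t : ℝ, 0 ≤ t → ∀ y : Rd d, H t y = Jac (ξ t) y := by
  intro t ht y
  refine key_ode (fun s => Jac (ξ s) y) (fun s => H s y)
    (fun u => Matrix.of fun i l => pd l (fun z => V u z i) y)
    (fun u hu i j => hcomm u hu y i j)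
    (fun u hu => hinv u hu y) ?_ (hH0 y) t ht
  intro u hu i j
  have hval : (∑ k, ∑ l, ((Jac (ξ u) y)⁻¹)ᵀ k l * pd l (fun z => V u z i) y * H u y k j)
      = ((Matrix.of fun i l => pd l (fun z => V u z i) y : Matrix (Fin d) (Fin d) ℝ)
          * ((Jac (ξ u) y)⁻¹ * H u y)) i j := by
    simp only [Matrix.mul_apply, Finset.mul_sum, Matrix.transpose_apply, Matrix.of_apply]
    rw [Finset.sum_comm]
    exact Finset.sum_congr rfl fun l _ => Finset.sum_congr rfl fun k _ => by ring
  exact hval ▸ hH u hu y i j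
end
end

section
/- (Reduction of the elastic stress) Let d ≥ 1 and let ξ : ℝ^d → ℝ^d be three times continuously differentiable with ∇ξ(y) invertible for every y. Set 𝒥 = det∇ξ, B = ((∇ξ)^{-1})^⊤, H = ∇ξ, and π = 𝒥^{−1}. Then for every i ∈ {1,…,d}, ∑_{k,l,j} B_{kl} ∂_l( π H_{ij} H_{kj} ) = 𝒥^{−1} Δξ_i pointwise on ℝ^d, where Δ is the componentwise Laplacian. -/
noncomputable section
open Matrix

def detCM (d : ℕ) : ContinuousMultilinearMap ℝ (fun _ : Fin d => (Fin d → ℝ)) ℝ where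
  toMultilinearMap := (Matrix.detRowAlternating (n := Fin d) (R := ℝ)).toMultilinearMap
  cont := by
    have : Continuous fun A : Matrix (Fin d) (Fin d) ℝ => A.det := continuous_id.matrix_det
    exact this

lemma detCM_apply {d : ℕ} (A : Fin d → Fin d → ℝ) : detCM d A = (Matrix.of A).det := rfl

lemma det_updateRow_eq {d : ℕ} (A : Matrix (Fin d) (Fin d) ℝ) (m : Fin d) (v : Fin d → ℝ) :
    (A.updateRow m v).det = ∑ k, A.adjugate k m * v k := by
  rw [← Matrix.cramer_transpose_apply, Matrix.cramer_eq_adjugate_mulVec,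
    ← Matrix.adjugate_transpose]
  simp [Matrix.mulVec, dotProduct, Matrix.transpose_apply]

lemma det_hasFDerivAt {d : ℕ} (M : Rd d → Matrix (Fin d) (Fin d) ℝ) (y : Rd d)
    (D : Fin d → Fin d → (Rd d →L[ℝ] ℝ))
    (hD : ∀ m k, HasFDerivAt (fun z => M z m k) (D m k) y) :
    HasFDerivAt (fun z => (M z).det)
      (∑ m, ∑ k, (M y).adjugate k m • D m k) y := by
  have hg : ∀ m : Fin d, HasFDerivAt (fun z => M z m)
      (ContinuousLinearMap.pi (fun k => D m k)) y := by
    intro m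
    exact hasFDerivAt_pi.2 (hD m)
  have h := HasFDerivAt.multilinear_comp (detCM d) hg
  refine h.congr_fderiv ?_
  symm
  ext v
  have hterm : ∀ m : Fin d,
      (((detCM d).toContinuousLinearMap (fun j => M y j) m).comp
        (ContinuousLinearMap.pi (fun k => D m k))) v
      = ((M y).updateRow m (fun k => D m k v)).det := fun m => rfl
  simp only [ContinuousLinearMap.sum_apply, hterm, det_updateRow_eq,
    ContinuousLinearMap.smul_apply, smul_eq_mul]

lemma contDiff_pd {d : ℕ} {n : ℕ} (f : Rd d → ℝ) (hf : ContDiff ℝ (n + 1 : ℕ) f) (j : Fin d) :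
    ContDiff ℝ (n : ℕ) (pd j f) := by
  have h1 : ContDiff ℝ (n : ℕ) (fderiv ℝ f) := hf.fderiv_right (by norm_cast)
  exact h1.clm_apply contDiff_const

lemma pd_comm {d : ℕ} (f : Rd d → ℝ) (hf : ContDiff ℝ 3 f) (l j : Fin d) (y : Rd d) :
    pd l (pd j f) y = pd j (pd l f) y := by
  have hsymm : IsSymmSndFDerivAt ℝ f y :=
    hf.contDiffAt.isSymmSndFDerivAt (by norm_num)
  have hdf : DifferentiableAt ℝ (fderiv ℝ f) y := by
    have : ContDiff ℝ (2 : ℕ) (fderiv ℝ f) := hf.fderiv_right (by norm_num)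
    exact (this.differentiable (by norm_num)).differentiableAt
  have key : ∀ a b : Rd d,
      fderiv ℝ (fun z => fderiv ℝ f z a) y b = fderiv ℝ (fderiv ℝ f) y b a := by
    intro a b
    rw [fderiv_clm_apply hdf (differentiableAt_const a)]
    simp
  show fderiv ℝ (fun z => fderiv ℝ f z _) y _ = fderiv ℝ (fun z => fderiv ℝ f z _) y _
  rw [key, key]
  exact hsymm _ _

lemma pd_mul {d : ℕ} {f g : Rd d → ℝ} {y : Rd d} (hf : DifferentiableAt ℝ f y)
    (hg : DifferentiableAt ℝ g y) (l : Fin d) :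
    pd l (fun z => f z * g z) y = pd l f y * g y + f y * pd l g y := by
  simp only [pd, fderiv_fun_mul hf hg, ContinuousLinearMap.add_apply,
    ContinuousLinearMap.smul_apply, smul_eq_mul]
  ring

lemma pd_inv {d : ℕ} {f : Rd d → ℝ} {y : Rd d} (hf : DifferentiableAt ℝ f y)
    (h0 : f y ≠ 0) (l : Fin d) :
    pd l (fun z => (f z)⁻¹) y = -((f y) ^ 2)⁻¹ * pd l f y := by
  have hcomp : (fun z => (f z)⁻¹) = Inv.inv ∘ f := rfl
  simp only [pd, hcomp, fderiv_comp y (differentiableAt_inv h0) hf, fderiv_inv,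
    ContinuousLinearMap.coe_comp', Function.comp_apply, ContinuousLinearMap.smulRight_apply,
    ContinuousLinearMap.one_apply, ContinuousLinearMap.toSpanSingleton_apply, smul_eq_mul]
  ring

lemma pd_sum {d : ℕ} {ι : Type*} (s : Finset ι) {f : ι → Rd d → ℝ} {y : Rd d}
    (hf : ∀ j ∈ s, DifferentiableAt ℝ (f j) y) (l : Fin d) :
    pd l (fun z => ∑ j ∈ s, f j z) y = ∑ j ∈ s, pd l (f j) y := by
  simp only [pd]
  rw [fderiv_fun_sum hf]
  simp

lemma key_alg {d : ℕ} (A Ainv adj : Matrix (Fin d) (Fin d) ℝ)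
    (P : Fin d → Fin d → Fin d → ℝ) (dJ : Fin d → ℝ) (e c : ℝ) (i : Fin d)
    (hID : ∀ l j, ∑ k, Ainv l k * A k j = if l = j then 1 else 0)
    (hInv : ∀ l k, Ainv l k = e * adj l k)
    (hdJ : ∀ l, dJ l = ∑ k, ∑ l', adj l' k * P l k l')
    (hsymm : ∀ l k j, P l k j = P j k l)
    (hc : c = -(e * e)) :
    ∑ k, ∑ l, Ainv l k *
        (c * dJ l * (∑ j, A i j * A k j) + e * ∑ j, (P l i j * A k j + A i j * P l k j))
      = e * ∑ l, P l i l := by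
  have hdelta : ∀ (g : Fin d → ℝ) (l : Fin d),
      ∑ j, g j * (if l = j then (1 : ℝ) else 0) = g l := by
    intro g l
    simp [mul_ite, Finset.sum_ite_eq]
  have T1 : ∑ k, ∑ l, ∑ j, Ainv l k * (c * dJ l) * (A i j * A k j)
      = ∑ l, c * dJ l * A i l := by
    rw [Finset.sum_comm]
    refine Finset.sum_congr rfl fun l _ => ?_
    calc ∑ k, ∑ j, Ainv l k * (c * dJ l) * (A i j * A k j)
        = ∑ j, (c * dJ l * A i j) * ∑ k, Ainv l k * A k j := by
          rw [Finset.sum_comm]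
          refine Finset.sum_congr rfl fun j _ => ?_
          rw [Finset.mul_sum]
          exact Finset.sum_congr rfl fun k _ => by ring
      _ = c * dJ l * A i l := by
          simp only [hID]
          exact hdelta (fun j => c * dJ l * A i j) l
  have T2 : ∑ k, ∑ l, ∑ j, Ainv l k * e * (P l i j * A k j) = e * ∑ l, P l i l := by
    rw [Finset.sum_comm]
    calc ∑ l, ∑ k, ∑ j, Ainv l k * e * (P l i j * A k j)
        = ∑ l, ∑ j, (e * P l i j) * ∑ k, Ainv l k * A k j := by
          refine Finset.sum_congr rfl fun l _ => ?_
          rw [Finset.sum_comm]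
          refine Finset.sum_congr rfl fun j _ => ?_
          rw [Finset.mul_sum]
          exact Finset.sum_congr rfl fun k _ => by ring
      _ = e * ∑ l, P l i l := by
          rw [Finset.mul_sum]
          refine Finset.sum_congr rfl fun l _ => ?_
          simp only [hID]
          have := hdelta (fun j => e * P l i j) l
          simpa using this
  have T3 : ∑ k, ∑ l, ∑ j, Ainv l k * e * (A i j * P l k j)
      = ∑ j, e * e * (A i j * dJ j) := by
    calc ∑ k, ∑ l, ∑ j, Ainv l k * e * (A i j * P l k j)
        = ∑ k, ∑ j, ∑ l, Ainv l k * e * (A i j * P l k j) := by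
          exact Finset.sum_congr rfl fun k _ => Finset.sum_comm
      _ = ∑ j, ∑ k, ∑ l, Ainv l k * e * (A i j * P l k j) := Finset.sum_comm
      _ = ∑ j, e * e * (A i j * dJ j) := by
          refine Finset.sum_congr rfl fun j _ => ?_
          have : ∀ k l : Fin d, Ainv l k * e * (A i j * P l k j)
              = (e * e * A i j) * (adj l k * P j k l) := by
            intro k l
            rw [hInv, hsymm l k j]
            ring
          simp only [this, ← Finset.mul_sum]
          rw [show (∑ k, ∑ l, adj l k * P j k l) = dJ j from (hdJ j).symm]
          ring
  calc ∑ k, ∑ l, Ainv l k *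
        (c * dJ l * (∑ j, A i j * A k j) + e * ∑ j, (P l i j * A k j + A i j * P l k j))
      = ∑ k, ∑ l, ((∑ j, Ainv l k * (c * dJ l) * (A i j * A k j))
          + ((∑ j, Ainv l k * e * (P l i j * A k j))
            + (∑ j, Ainv l k * e * (A i j * P l k j)))) := by
        refine Finset.sum_congr rfl fun k _ => Finset.sum_congr rfl fun l _ => ?_
        rw [Finset.sum_add_distrib, ← Finset.mul_sum, ← Finset.mul_sum, ← Finset.mul_sum]
        ring
    _ = (∑ k, ∑ l, ∑ j, Ainv l k * (c * dJ l) * (A i j * A k j))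
          + ((∑ k, ∑ l, ∑ j, Ainv l k * e * (P l i j * A k j))
            + (∑ k, ∑ l, ∑ j, Ainv l k * e * (A i j * P l k j))) := by
        simp [Finset.sum_add_distrib]
    _ = e * ∑ l, P l i l := by
        rw [T1, T2, T3]
        have hz : (∑ l, c * dJ l * A i l) + (∑ j, e * e * (A i j * dJ j)) = 0 := by
          rw [← Finset.sum_add_distrib]
          refine Finset.sum_eq_zero fun l _ => by rw [hc]; ring
        calc (∑ l, c * dJ l * A i l) + ((e * ∑ l, P l i l) + ∑ j, e * e * (A i j * dJ j))
            = ((∑ l, c * dJ l * A i l) + ∑ j, e * e * (A i j * dJ j)) + e * ∑ l, P l i l := by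
              ring
          _ = e * ∑ l, P l i l := by rw [hz]; ring

lemma contDiff_pd3 {d : ℕ} (f : Rd d → ℝ) (hf : ContDiff ℝ 3 f) (j : Fin d) :
    ContDiff ℝ 2 (pd j f) := by
  have h1 : ContDiff ℝ 2 (fderiv ℝ f) := hf.fderiv_right (by norm_num)
  exact h1.clm_apply contDiff_const

/-- Reduction of the elastic stress: for a `C³` map `ξ` with invertible Jacobian, with
`𝒥 = det∇ξ`, `B = ((∇ξ)⁻¹)ᵀ`, `H = ∇ξ`, `π = 𝒥⁻¹`:
`∑_{k,l,j} B_{kl} ∂_l(π H_{ij} H_{kj}) = 𝒥⁻¹ Δξ_i`. -/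
theorem elastic_stress_reduction (d : ℕ) (hd : 1 ≤ d) (ξ : Rd d → Rd d)
    (hξ : ContDiff ℝ 3 ξ)
    (hinv : ∀ y : Rd d, (Jac ξ y).det ≠ 0) :
    ∀ i : Fin d, ∀ y : Rd d,
      ∑ k, ∑ l, ((Jac ξ y)⁻¹)ᵀ k l *
          pd l (fun z => ((Jac ξ z).det)⁻¹ * ∑ j, Jac ξ z i j * Jac ξ z k j) y
        = ((Jac ξ y).det)⁻¹ * ∑ l, pd l (fun z => pd l (fun w => ξ w i) z) y := by
  intro i y
  classical
  have hψ : ∀ k : Fin d, ContDiff ℝ 3 (fun z => ξ z k) := fun k =>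
    (EuclideanSpace.proj k (𝕜 := ℝ)).contDiff.comp hξ
  have hentry : ∀ k j, ContDiff ℝ 2 (fun z => Jac ξ z k j) := fun k j =>
    contDiff_pd3 (fun z => ξ z k) (hψ k) j
  have hhd' : ∀ k j (z : Rd d), DifferentiableAt ℝ (fun z => Jac ξ z k j) z := fun k j z =>
    ((hentry k j).differentiable (by norm_num)).differentiableAt
  have hdetd : ∀ z : Rd d, DifferentiableAt ℝ (fun z => (Jac ξ z).det) z := fun z =>
    (det_hasFDerivAt (fun z => Jac ξ z) z _ (fun m k => (hhd' m k z).hasFDerivAt)).differentiableAt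
  have hπd : DifferentiableAt ℝ (fun z => ((Jac ξ z).det)⁻¹) y := (hdetd y).inv (hinv y)
  have hSd : ∀ k : Fin d, DifferentiableAt ℝ (fun z => ∑ j, Jac ξ z i j * Jac ξ z k j) y := by
    intro k
    apply DifferentiableAt.fun_sum
    intro j _
    exact (hhd' i j y).mul (hhd' k j y)
  have pdJ : ∀ l : Fin d, pd l (fun z => (Jac ξ z).det) y
      = ∑ m, ∑ k', (Jac ξ y).adjugate k' m * pd l (fun z => Jac ξ z m k') y := by
    intro l
    have hJ := det_hasFDerivAt (fun z => Jac ξ z) y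
      (fun m k' => fderiv ℝ (fun z => Jac ξ z m k') y)
      (fun m k' => (hhd' m k' y).hasFDerivAt)
    show fderiv ℝ (fun z => (Jac ξ z).det) y _ = _
    rw [hJ.fderiv]
    simp [pd]
  have hclair : ∀ l k j : Fin d,
      pd l (fun z => Jac ξ z k j) y = pd j (fun z => Jac ξ z k l) y := fun l k j =>
    pd_comm (fun w => ξ w k) (hψ k) l j y
  have hID : ∀ l j : Fin d, ∑ k, (Jac ξ y)⁻¹ l k * Jac ξ y k j = if l = j then 1 else 0 := by
    intro l j
    have h1 := Matrix.nonsing_inv_mul (Jac ξ y) (isUnit_iff_ne_zero.2 (hinv y))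
    have h2 := congrFun (congrFun h1 l) j
    rwa [Matrix.mul_apply, Matrix.one_apply] at h2
  have hInv : ∀ l k : Fin d,
      (Jac ξ y)⁻¹ l k = ((Jac ξ y).det)⁻¹ * (Jac ξ y).adjugate l k := by
    intro l k
    rw [Matrix.inv_def, Matrix.smul_apply, Ring.inverse_eq_inv', smul_eq_mul]
  have step : ∀ k l : Fin d,
      pd l (fun z => ((Jac ξ z).det)⁻¹ * ∑ j, Jac ξ z i j * Jac ξ z k j) y
      = -(((Jac ξ y).det) ^ 2)⁻¹ * pd l (fun z => (Jac ξ z).det) y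
          * (∑ j, Jac ξ y i j * Jac ξ y k j)
        + ((Jac ξ y).det)⁻¹ * ∑ j, (pd l (fun z => Jac ξ z i j) y * Jac ξ y k j
            + Jac ξ y i j * pd l (fun z => Jac ξ z k j) y) := by
    intro k l
    rw [pd_mul hπd (hSd k) l, pd_inv (hdetd y) (hinv y) l,
      pd_sum Finset.univ (fun j _ => (hhd' i j y).fun_mul (hhd' k j y)) l]
    congr 1
    refine congrArg _ (Finset.sum_congr rfl fun j _ => ?_)
    rw [pd_mul (hhd' i j y) (hhd' k j y) l]
  calc ∑ k, ∑ l, ((Jac ξ y)⁻¹)ᵀ k l *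
          pd l (fun z => ((Jac ξ z).det)⁻¹ * ∑ j, Jac ξ z i j * Jac ξ z k j) y
      = ∑ k, ∑ l, (Jac ξ y)⁻¹ l k *
          (-(((Jac ξ y).det) ^ 2)⁻¹ * pd l (fun z => (Jac ξ z).det) y
              * (∑ j, Jac ξ y i j * Jac ξ y k j)
            + ((Jac ξ y).det)⁻¹ * ∑ j, (pd l (fun z => Jac ξ z i j) y * Jac ξ y k j
                + Jac ξ y i j * pd l (fun z => Jac ξ z k j) y)) := by
        refine Finset.sum_congr rfl fun k _ => Finset.sum_congr rfl fun l _ => ?_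
        rw [Matrix.transpose_apply, step k l]
    _ = ((Jac ξ y).det)⁻¹ * ∑ l, pd l (fun z => Jac ξ z i l) y := by
        refine key_alg (Jac ξ y) ((Jac ξ y)⁻¹) ((Jac ξ y).adjugate)
          (fun l k j => pd l (fun z => Jac ξ z k j) y)
          (fun l => pd l (fun z => (Jac ξ z).det) y)
          (((Jac ξ y).det)⁻¹) (-(((Jac ξ y).det) ^ 2)⁻¹) i hID hInv pdJ hclair ?_
        rw [sq, mul_inv]
    _ = ((Jac ξ y).det)⁻¹ * ∑ l, pd l (fun z => pd l (fun w => ξ w i) z) y := rfl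
end
end

section
/- (Weighted Gronwall step) Let T > 0, C > 0, and let ℒ : [0, T] → [0, ∞) be differentiable and satisfy ℒ'(t) + (1+t)^{−1}ℒ(t) ≤ C(1+t)^{−2}( ℒ(t) + ℒ(t)^{7/2} ) for all t ∈ [0, T]. Define ℳ(t) = sup_{0≤s≤t} (1+s)ℒ(s). Then there exists a constant C̄ depending only on C (one may take C̄ = e^C·max(1, 2C/7 + C)) such that (1+t)ℒ(t) ≤ C̄·ℒ(0) + C̄·ℳ(t)^{7/2} for all t ∈ [0, T]. -/
noncomputable section
open Set

set_option maxHeartbeats 1000000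

/-- Weighted Gronwall step: if `ℒ' + (1+t)⁻¹ℒ ≤ C(1+t)⁻²(ℒ + ℒ^{7/2})` on `[0,T]` for a
nonnegative differentiable `ℒ`, then `(1+t)ℒ(t) ≤ C̄ ℒ(0) + C̄ ℳ(t)^{7/2}` where
`ℳ(t) = sup_{0≤s≤t} (1+s)ℒ(s)` and `C̄` depends only on `C`. -/
theorem weighted_gronwall_step (C : ℝ) (hC : 0 < C) :
    ∃ Cb > (0:ℝ), ∀ (T : ℝ), 0 < T → ∀ (L L' : ℝ → ℝ),
      (∀ t ∈ Icc (0:ℝ) T, 0 ≤ L t) →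
      (∀ t ∈ Icc (0:ℝ) T, HasDerivWithinAt L (L' t) (Icc (0:ℝ) T) t) →
      (∀ t ∈ Icc (0:ℝ) T,
        L' t + (1+t)⁻¹ * L t ≤ C * ((1+t)^2)⁻¹ * (L t + L t ^ ((7:ℝ)/2))) →
      ∀ t ∈ Icc (0:ℝ) T,
        (1+t) * L t ≤ Cb * L 0
          + Cb * (sSup ((fun s => (1+s) * L s) '' Icc (0:ℝ) t)) ^ ((7:ℝ)/2) := by
  refine ⟨Real.exp C * (1 + 2*C/7), by positivity, ?_⟩
  intro T hT L L' hL0 hLd hineq t ht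
  set F : ℝ → ℝ := (fun s => (1+s) * L s) with hFdef
  have hsub : Icc (0:ℝ) t ⊆ Icc 0 T := Icc_subset_Icc le_rfl ht.2
  have hLc : ContinuousOn L (Icc 0 T) := fun s hs => (hLd s hs).continuousWithinAt
  have hFc : ContinuousOn F (Icc 0 t) :=
    (continuousOn_const.add continuousOn_id).mul (hLc.mono hsub)
  set M : ℝ := sSup (F '' Icc 0 t) with hMdef
  have h0t : (0:ℝ) ∈ Icc (0:ℝ) t := left_mem_Icc.mpr ht.1
  have hbdd : BddAbove (F '' Icc 0 t) := (isCompact_Icc.image_of_continuousOn hFc).bddAbove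
  have hFM : ∀ s ∈ Icc (0:ℝ) t, F s ≤ M := fun s hs => le_csSup hbdd ⟨s, hs, rfl⟩
  have hF0 : F 0 = L 0 := by simp [hFdef]
  have hL00 : 0 ≤ L 0 := hL0 0 (hsub h0t)
  have hM0 : 0 ≤ M := le_trans (by simpa [hF0] using hL00) (hFM 0 h0t)
  set K : ℝ := (2*C/7) * Real.exp C * M ^ ((7:ℝ)/2) with hKdef
  have hK0 : 0 ≤ K := by positivity
  set H : ℝ → ℝ := fun s => F s * Real.exp (C * (1+s)⁻¹) + K * (1+s) ^ (-(7:ℝ)/2)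
    with hHdef
  -- continuity of H on Icc 0 t
  have hne : ∀ s ∈ Icc (0:ℝ) t, (0:ℝ) < 1 + s := fun s hs => by linarith [hs.1]
  have hHc : ContinuousOn H (Icc 0 t) := by
    apply ContinuousOn.add
    · exact hFc.mul ((Real.continuous_exp.comp_continuousOn
        (continuousOn_const.mul ((continuousOn_const.add continuousOn_id).inv₀
          (fun s hs => (hne s hs).ne')))))
    · exact continuousOn_const.mul
        (((continuousOn_const.add continuousOn_id)).rpow_const
          (fun s hs => Or.inl (hne s hs).ne'))
  -- derivative bound on the interior
  have key : ∀ s ∈ interior (Icc (0:ℝ) t),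
      HasDerivAt H
        ((L s + (1+s) * L' s) * Real.exp (C * (1+s)⁻¹)
          + F s * (Real.exp (C * (1+s)⁻¹) * (C * -(1 / (1+s)^2)))
          + K * ((-(7:ℝ)/2) * (1+s) ^ ((-(7:ℝ)/2) - 1) * 1)) s
      ∧ ((L s + (1+s) * L' s) * Real.exp (C * (1+s)⁻¹)
          + F s * (Real.exp (C * (1+s)⁻¹) * (C * -(1 / (1+s)^2)))
          + K * ((-(7:ℝ)/2) * (1+s) ^ ((-(7:ℝ)/2) - 1) * 1)) ≤ 0 := by
    intro s hs
    rw [interior_Icc] at hs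
    have hsT : s ∈ Icc (0:ℝ) T := ⟨hs.1.le, hs.2.le.trans ht.2⟩
    have hs1 : (0:ℝ) < 1 + s := by linarith [hs.1]
    have hLda : HasDerivAt L (L' s) s :=
      (hLd s hsT).hasDerivAt (Icc_mem_nhds hs.1 (lt_of_lt_of_le hs.2 ht.2))
    have h1s : HasDerivAt (fun u => 1 + u) 1 s := (hasDerivAt_id s).const_add 1
    have hFda : HasDerivAt F (1 * L s + (1+s) * L' s) s := h1s.mul hLda
    have hga : HasDerivAt (fun u => C * (1+u)⁻¹) (C * -(1 / (1+s)^2)) s := by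
      have h : HasDerivAt (fun u => C * (1+u)⁻¹) (C * (-1 / (1+s)^2)) s :=
        (h1s.inv hs1.ne').const_mul C
      convert h using 1
      ring
    have hexpa : HasDerivAt (fun u => Real.exp (C * (1+u)⁻¹))
        (Real.exp (C * (1+s)⁻¹) * (C * -(1 / (1+s)^2))) s := hga.exp
    have hpowa : HasDerivAt (fun u => (1+u) ^ (-(7:ℝ)/2))
        ((-(7:ℝ)/2) * (1+s) ^ ((-(7:ℝ)/2) - 1) * 1) s := by
      have h : HasDerivAt (fun u => (1+u) ^ (-(7:ℝ)/2))
          ((-(7:ℝ)/2) * (1+s) ^ ((-(7:ℝ)/2) - 1) * 1) s :=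
        (Real.hasDerivAt_rpow_const (x := 1+s) (p := -(7:ℝ)/2)
        (Or.inl hs1.ne')).comp s h1s
      simpa using h
    constructor
    · have : HasDerivAt (fun u => F u * Real.exp (C * (1+u)⁻¹) + K * (1+u) ^ (-(7:ℝ)/2)) _ s :=
        (hFda.mul hexpa).add ((hpowa.const_mul K))
      simpa [hHdef, mul_comm, mul_assoc, mul_left_comm, add_comm, add_assoc, add_left_comm]
        using this
    · -- the inequality
      set E : ℝ := Real.exp (C * (1+s)⁻¹) with hE
      have hEpos : 0 < E := Real.exp_pos _
      have hEle : E ≤ Real.exp C := by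
        apply Real.exp_le_exp.mpr
        have h1 : (1+s)⁻¹ ≤ 1 := by
          nlinarith [mul_inv_cancel₀ hs1.ne', inv_pos.mpr hs1, hs.1]
        nlinarith
      have hLs : 0 ≤ L s := hL0 s hsT
      -- from the hypothesis, multiplied by (1+s)
      have hineqs := hineq s hsT
      have hmain : L s + (1+s) * L' s ≤ C * (1+s)⁻¹ * (L s + L s ^ ((7:ℝ)/2)) := by
        have h2 : (1+s) * (L' s + (1+s)⁻¹ * L s)
            ≤ (1+s) * (C * ((1+s)^2)⁻¹ * (L s + L s ^ ((7:ℝ)/2))) :=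
          mul_le_mul_of_nonneg_left hineqs hs1.le
        have e1 : (1+s) * (L' s + (1+s)⁻¹ * L s) = L s + (1+s) * L' s := by
          field_simp; ring
        have e2 : (1+s) * (C * ((1+s)^2)⁻¹ * (L s + L s ^ ((7:ℝ)/2)))
            = C * (1+s)⁻¹ * (L s + L s ^ ((7:ℝ)/2)) := by
          field_simp
        rw [e1, e2] at h2; exact h2
      -- bound L s ^ (7/2)
      have hLM : L s ≤ M * (1+s)⁻¹ := by
        have := hFM s ⟨hs.1.le, hs.2.le⟩
        rw [hFdef] at this
        calc L s = ((1+s) * L s) * (1+s)⁻¹ := by field_simp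
        _ ≤ M * (1+s)⁻¹ := mul_le_mul_of_nonneg_right this (by positivity)
      have hrpow : L s ^ ((7:ℝ)/2) ≤ M ^ ((7:ℝ)/2) * (1+s) ^ (-(7:ℝ)/2) := by
        calc L s ^ ((7:ℝ)/2) ≤ (M * (1+s)⁻¹) ^ ((7:ℝ)/2) :=
              Real.rpow_le_rpow hLs hLM (by norm_num)
        _ = M ^ ((7:ℝ)/2) * ((1+s)⁻¹) ^ ((7:ℝ)/2) :=
              Real.mul_rpow hM0 (by positivity)
        _ = M ^ ((7:ℝ)/2) * (1+s) ^ (-(7:ℝ)/2) := by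
              rw [Real.inv_rpow hs1.le, ← Real.rpow_neg hs1.le]
              norm_num
      -- combine
      have hX : (1+s) ^ ((-(7:ℝ)/2) - 1) = (1+s) ^ (-(7:ℝ)/2) * (1+s)⁻¹ := by
        rw [Real.rpow_sub hs1, Real.rpow_one]; ring
      have hXpos : (0:ℝ) < (1+s) ^ (-(7:ℝ)/2) := Real.rpow_pos_of_pos hs1 _
      -- first two terms sum ≤ C (1+s)⁻¹ L^{7/2} E
      have step1 : (L s + (1+s) * L' s) * E + F s * (E * (C * -(1 / (1+s)^2)))
          ≤ C * (1+s)⁻¹ * (L s ^ ((7:ℝ)/2)) * E := by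
        have h2 : F s * (E * (C * -(1 / (1+s)^2))) = -(C * (1+s)⁻¹ * L s * E) := by
          rw [hFdef]; field_simp
        rw [h2]
        have := mul_le_mul_of_nonneg_right hmain hEpos.le
        nlinarith [this]
      have step2 : C * (1+s)⁻¹ * (L s ^ ((7:ℝ)/2)) * E
          ≤ C * (1+s)⁻¹ * (M ^ ((7:ℝ)/2) * (1+s) ^ (-(7:ℝ)/2)) * Real.exp C := by
        have hnn : 0 ≤ C * (1+s)⁻¹ := by positivity
        have hLp : 0 ≤ L s ^ ((7:ℝ)/2) := Real.rpow_nonneg hLs _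
        apply mul_le_mul
        · exact mul_le_mul_of_nonneg_left hrpow hnn
        · exact hEle
        · exact hEpos.le
        · positivity
      have step3 : K * ((-(7:ℝ)/2) * (1+s) ^ ((-(7:ℝ)/2) - 1) * 1)
          = -(C * (1+s)⁻¹ * (M ^ ((7:ℝ)/2) * (1+s) ^ (-(7:ℝ)/2)) * Real.exp C) := by
        rw [hKdef, hX]; ring
      rw [step3]
      linarith [step1.trans step2]
  -- H is antitone on Icc 0 t
  have hanti : AntitoneOn H (Icc 0 t) := by
    apply antitoneOn_of_deriv_nonpos (convex_Icc 0 t) hHc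
    · intro s hs
      exact ((key s hs).1).differentiableAt.differentiableWithinAt
    · intro s hs
      rw [(key s hs).1.deriv]
      exact (key s hs).2
  have hHt : H t ≤ H 0 := hanti h0t (right_mem_Icc.mpr ht.1) ht.1
  -- F t ≤ H t
  have h1t : (0:ℝ) < 1 + t := by linarith [ht.1]
  have hFt0 : 0 ≤ F t := mul_nonneg (by linarith) (hL0 t ht)
  have hE1 : (1:ℝ) ≤ Real.exp (C * (1+t)⁻¹) :=
    Real.one_le_exp (by positivity)
  have hFtH : F t ≤ H t := by
    have h1 : F t * 1 ≤ F t * Real.exp (C * (1+t)⁻¹) :=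
      mul_le_mul_of_nonneg_left hE1 hFt0
    have h2 : 0 ≤ K * (1+t) ^ (-(7:ℝ)/2) :=
      mul_nonneg hK0 (Real.rpow_pos_of_pos h1t _).le
    simp only [hHdef]
    linarith
  -- value of H 0
  have hH0 : H 0 = L 0 * Real.exp C + K := by
    simp [hHdef, hF0]
  have hfinal : F t ≤ L 0 * Real.exp C + K := by
    rw [← hH0]; exact hFtH.trans hHt
  rw [hKdef] at hfinal
  have hMr : 0 ≤ M ^ ((7:ℝ)/2) := Real.rpow_nonneg hM0 _
  have hexpC1 : (1:ℝ) ≤ Real.exp C := Real.one_le_exp hC.le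
  calc (1+t) * L t = F t := rfl
  _ ≤ L 0 * Real.exp C + (2*C/7) * Real.exp C * M ^ ((7:ℝ)/2) := hfinal
  _ ≤ Real.exp C * (1 + 2*C/7) * L 0 + Real.exp C * (1 + 2*C/7) * M ^ ((7:ℝ)/2) := by
      nlinarith [mul_nonneg (mul_nonneg hC.le (Real.exp_pos C).le) hL00,
        mul_nonneg (Real.exp_pos C).le hMr, mul_nonneg (mul_nonneg hC.le (Real.exp_pos C).le) hMr]
end
end

section
/- (L² estimate for the reciprocal determinant) Let d ∈ {2, 3}, c ≥ 1, ε > 0, and let G : ℝ^d → ℝ^{d×d} be a measurable matrix-valued function satisfying, for Lebesgue-a.e. y ∈ ℝ^d: ‖G(y)‖ ≤ 2c, det G(y) ≥ c^d/8, and ∫_{ℝ^d} ‖G(y) − cI‖² dy ≤ ε²c. Then there is a constant C depending only on d such that ∫_{ℝ^d} | (det G(y))^{−1} − c^{−d} |² dy ≤ C ε² c^{−2d−1}. -/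
noncomputable section
open MeasureTheory Matrix

/-- The Frobenius norm of a real matrix. -/
def frob {d : ℕ} (A : Matrix (Fin d) (Fin d) ℝ) : ℝ :=
  Real.sqrt (∑ i, ∑ j, (A i j) ^ 2)

lemma frob_nonneg' {d : ℕ} (A : Matrix (Fin d) (Fin d) ℝ) : 0 ≤ frob A :=
  Real.sqrt_nonneg _

lemma abs_entry_le_frob {d : ℕ} (A : Matrix (Fin d) (Fin d) ℝ) (i j : Fin d) :
    |A i j| ≤ frob A := by
  have h1 : (A i j) ^ 2 ≤ ∑ i, ∑ j, (A i j) ^ 2 := by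
    calc (A i j)^2 ≤ ∑ j, (A i j)^2 :=
          Finset.single_le_sum (fun k _ => sq_nonneg (A i k)) (Finset.mem_univ j)
      _ ≤ ∑ i, ∑ j, (A i j)^2 :=
          Finset.single_le_sum (fun k _ => Finset.sum_nonneg fun l _ => sq_nonneg (A k l))
            (Finset.mem_univ i)
  calc |A i j| = Real.sqrt ((A i j)^2) := (Real.sqrt_sq_eq_abs _).symm
    _ ≤ frob A := Real.sqrt_le_sqrt h1

lemma det_bound2 (c : ℝ) (hc : 1 ≤ c) (A : Matrix (Fin 2) (Fin 2) ℝ)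
    (hA : frob A ≤ 2 * c) :
    |A.det - c ^ 2| ≤ 75 * c ^ 1 * frob (A - c • (1 : Matrix (Fin 2) (Fin 2) ℝ)) := by
  set E := A - c • (1 : Matrix (Fin 2) (Fin 2) ℝ) with hE
  set f := frob E with hf
  have hf0 : 0 ≤ f := frob_nonneg' _
  have hent : ∀ i j : Fin 2, |E i j| ≤ f := fun i j => abs_entry_le_frob E i j
  have hbig : ∀ i j : Fin 2, |E i j| ≤ 3 * c := by
    intro i j
    have h1 : |A i j| ≤ 2 * c := (abs_entry_le_frob A i j).trans hA
    have h2 : E i j = A i j - c * (if i = j then 1 else 0) := by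
      simp [hE, Matrix.sub_apply, Matrix.smul_apply, Matrix.one_apply]
    rw [h2]
    have : |c * (if (i:Fin 2) = j then (1:ℝ) else 0)| ≤ c := by
      have hc0 : (0:ℝ) ≤ c := by linarith
      split
      · rw [mul_one, abs_of_nonneg hc0]
      · rw [mul_zero, abs_zero]; linarith
    calc |A i j - c * _| ≤ |A i j| + |c * _| := abs_sub _ _
      _ ≤ 2*c + c := add_le_add h1 this
      _ = 3*c := by ring
  have hAE : ∀ i j : Fin 2, A i j = E i j + c * (if i = j then 1 else 0) := by
    intro i j; simp [hE, Matrix.sub_apply, Matrix.smul_apply, Matrix.one_apply]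
  rw [Matrix.det_fin_two, hAE 0 0, hAE 0 1, hAE 1 0, hAE 1 1]
  norm_num
  have h00 := abs_le.mp (hent 0 0); have h01 := abs_le.mp (hent 0 1)
  have h10 := abs_le.mp (hent 1 0); have h11 := abs_le.mp (hent 1 1)
  have q1 : |E 0 0 * E 1 1| ≤ 3*c*f := by
    rw [abs_mul]; exact mul_le_mul (hbig 0 0) (hent 1 1) (abs_nonneg _) (by positivity)
  have q2 : |E 0 1 * E 1 0| ≤ 3*c*f := by
    rw [abs_mul]; exact mul_le_mul (hbig 0 1) (hent 1 0) (abs_nonneg _) (by positivity)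
  have q1' := abs_le.mp q1; have q2' := abs_le.mp q2
  have hc00 : -(c*f) ≤ c * E 0 0 ∧ c * E 0 0 ≤ c*f := by
    constructor <;> nlinarith [h00.1, h00.2]
  have hc11 : -(c*f) ≤ c * E 1 1 ∧ c * E 1 1 ≤ c*f := by
    constructor <;> nlinarith [h11.1, h11.2]
  rw [abs_le]
  constructor <;> [nlinarith [hc00.1, hc11.1, q1'.1, q2'.2, hc]; nlinarith [hc00.2, hc11.2, q1'.2, q2'.1, hc]]

lemma det_bound3 (c : ℝ) (hc : 1 ≤ c) (A : Matrix (Fin 3) (Fin 3) ℝ)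
    (hA : frob A ≤ 2 * c) :
    |A.det - c ^ 3| ≤ 75 * c ^ 2 * frob (A - c • (1 : Matrix (Fin 3) (Fin 3) ℝ)) := by
  have hc0 : (0:ℝ) ≤ c := by linarith
  set E := A - c • (1 : Matrix (Fin 3) (Fin 3) ℝ) with hE
  set f := frob E with hf
  have hf0 : 0 ≤ f := frob_nonneg' _
  have hent : ∀ i j : Fin 3, |E i j| ≤ f := fun i j => abs_entry_le_frob E i j
  have hbig : ∀ i j : Fin 3, |E i j| ≤ 3 * c := by
    intro i j
    have h1 : |A i j| ≤ 2 * c := (abs_entry_le_frob A i j).trans hA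
    have h2 : E i j = A i j - c * (if i = j then 1 else 0) := by
      simp [hE, Matrix.sub_apply, Matrix.smul_apply, Matrix.one_apply]
    rw [h2]
    have h3 : |c * (if (i:Fin 3) = j then (1:ℝ) else 0)| ≤ c := by
      split
      · rw [mul_one, abs_of_nonneg hc0]
      · rw [mul_zero, abs_zero]; linarith
    calc |A i j - c * _| ≤ |A i j| + |c * _| := abs_sub _ _
      _ ≤ 2*c + c := add_le_add h1 h3
      _ = 3*c := by ring
  have hAE : ∀ i j : Fin 3, A i j = E i j + c * (if i = j then 1 else 0) := by
    intro i j; simp [hE, Matrix.sub_apply, Matrix.smul_apply, Matrix.one_apply]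
  have lin : ∀ i j : Fin 3, |c^2 * E i j| ≤ c^2 * f := by
    intro i j
    rw [abs_mul, abs_of_nonneg (by positivity : (0:ℝ) ≤ c^2)]
    exact mul_le_mul_of_nonneg_left (hent i j) (by positivity)
  have quad : ∀ i j k l : Fin 3, |c * (E i j * E k l)| ≤ 3 * c^2 * f := by
    intro i j k l
    rw [abs_mul, abs_of_nonneg hc0, abs_mul]
    calc c * (|E i j| * |E k l|) ≤ c * (3*c * f) := by
          exact mul_le_mul_of_nonneg_left
            (mul_le_mul (hbig i j) (hent k l) (abs_nonneg _) (by positivity)) hc0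
      _ = 3 * c^2 * f := by ring
  have cub : ∀ i j k l m n : Fin 3, |E i j * E k l * E m n| ≤ 9 * c^2 * f := by
    intro i j k l m n
    rw [abs_mul, abs_mul]
    calc |E i j| * |E k l| * |E m n| ≤ (3*c) * (3*c) * f := by
          apply mul_le_mul _ (hent m n) (abs_nonneg _) (by positivity)
          exact mul_le_mul (hbig i j) (hbig k l) (abs_nonneg _) (by positivity)
      _ = 9 * c^2 * f := by ring
  have a00 : A 0 0 = E 0 0 + c := by rw [hAE, if_pos rfl]; ring
  have a11 : A 1 1 = E 1 1 + c := by rw [hAE, if_pos rfl]; ring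
  have a22 : A 2 2 = E 2 2 + c := by rw [hAE, if_pos rfl]; ring
  have a01 : A 0 1 = E 0 1 := by rw [hAE, if_neg (by decide)]; ring
  have a02 : A 0 2 = E 0 2 := by rw [hAE, if_neg (by decide)]; ring
  have a10 : A 1 0 = E 1 0 := by rw [hAE, if_neg (by decide)]; ring
  have a12 : A 1 2 = E 1 2 := by rw [hAE, if_neg (by decide)]; ring
  have a20 : A 2 0 = E 2 0 := by rw [hAE, if_neg (by decide)]; ring
  have a21 : A 2 1 = E 2 1 := by rw [hAE, if_neg (by decide)]; ring
  rw [Matrix.det_fin_three, a00, a01, a02, a10, a11, a12, a20, a21, a22]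
  have l00 := abs_le.mp (lin 0 0); have l11 := abs_le.mp (lin 1 1); have l22 := abs_le.mp (lin 2 2)
  have q1 := abs_le.mp (quad 0 0 1 1); have q2 := abs_le.mp (quad 0 0 2 2)
  have q3 := abs_le.mp (quad 1 1 2 2); have q4 := abs_le.mp (quad 0 1 1 0)
  have q5 := abs_le.mp (quad 0 2 2 0); have q6 := abs_le.mp (quad 1 2 2 1)
  have t1 := abs_le.mp (cub 0 0 1 1 2 2); have t2 := abs_le.mp (cub 0 0 1 2 2 1)
  have t3 := abs_le.mp (cub 0 1 1 0 2 2); have t4 := abs_le.mp (cub 0 1 1 2 2 0)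
  have t5 := abs_le.mp (cub 0 2 1 0 2 1); have t6 := abs_le.mp (cub 0 2 1 1 2 0)
  rw [abs_le]
  set_option maxHeartbeats 1000000 in
  constructor
  · linarith [l00.1, l11.1, l22.1, q1.1, q2.1, q3.1, q4.2, q5.2, q6.2,
      t1.1, t2.2, t3.2, t4.1, t5.1, t6.2]
  · linarith [l00.2, l11.2, l22.2, q1.2, q2.2, q3.2, q4.1, q5.1, q6.1,
      t1.2, t2.1, t3.1, t4.2, t5.2, t6.1]

lemma recip_sq (d : ℕ) (hd1 : 1 ≤ d) (c D f : ℝ) (hc : 1 ≤ c) (hf : 0 ≤ f)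
    (hdet : c ^ d / 8 ≤ D) (hdb : |D - c ^ d| ≤ 75 * c ^ (d - 1) * f) :
    (D⁻¹ - (c ^ d)⁻¹) ^ 2 ≤ (360000 / c ^ (2 * d + 2)) * f ^ 2 := by
  have hc0 : (0:ℝ) < c := by linarith
  have hp : (0:ℝ) < c ^ d := by positivity
  have hD : (0:ℝ) < D := lt_of_lt_of_le (by positivity) hdet
  have h1 : D⁻¹ - (c ^ d)⁻¹ = (c ^ d - D) / (D * c ^ d) := by
    field_simp
  have h2 : |D⁻¹ - (c ^ d)⁻¹| = |c ^ d - D| / (D * c ^ d) := by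
    rw [h1, abs_div, abs_of_pos (show (0:ℝ) < D * c ^ d by positivity)]
  have h3 : |c ^ d - D| ≤ 75 * c ^ (d - 1) * f := by rwa [abs_sub_comm]
  have h4 : (c ^ d) ^ 2 / 8 ≤ D * c ^ d := by
    have := mul_le_mul_of_nonneg_right hdet hp.le
    nlinarith
  have h5 : |D⁻¹ - (c ^ d)⁻¹| ≤ (75 * c ^ (d - 1) * f) / ((c ^ d) ^ 2 / 8) := by
    rw [h2]
    exact div_le_div₀ (by positivity) h3 (by positivity) h4
  have h6 : (D⁻¹ - (c ^ d)⁻¹) ^ 2 ≤ ((75 * c ^ (d - 1) * f) / ((c ^ d) ^ 2 / 8)) ^ 2 := by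
    rw [← sq_abs]
    exact pow_le_pow_left₀ (abs_nonneg _) h5 2
  refine h6.trans (le_of_eq ?_)
  rw [div_pow, mul_pow, mul_pow, ← pow_mul, ← pow_mul]
  have hexp2 : c ^ (d * 2 * 2) = c ^ ((d - 1) * 2) * c ^ (2 * d + 2) := by
    rw [← pow_add]; congr 1; omega
  rw [div_pow, ← pow_mul, hexp2]
  have h7 : (0:ℝ) < c ^ ((d-1)*2) := by positivity
  have h8 : (0:ℝ) < c ^ (2*d+2) := by positivity
  field_simp
  ring

/-- L² estimate for the reciprocal determinant: if `‖G‖ ≤ 2c`, `det G ≥ c^d/8` a.e. and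
`∫ ‖G − cI‖² ≤ ε²c`, then `∫ |(det G)⁻¹ − c^{−d}|² ≤ C ε² c^{−2d−1}` with `C = C(d)`. -/
theorem reciprocal_det_L2 (d : ℕ) (hd : d = 2 ∨ d = 3) :
    ∃ C > (0:ℝ), ∀ (c : ℝ), 1 ≤ c → ∀ (ε : ℝ), 0 < ε →
      ∀ G : Rd d → Matrix (Fin d) (Fin d) ℝ,
        (∀ i j : Fin d, Measurable fun y => G y i j) →
        (∀ᵐ y : Rd d, frob (G y) ≤ 2 * c ∧ c ^ d / 8 ≤ (G y).det) →
        (∫⁻ y : Rd d,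
            ENNReal.ofReal (frob (G y - c • (1 : Matrix (Fin d) (Fin d) ℝ)) ^ 2))
          ≤ ENNReal.ofReal (ε ^ 2 * c) →
        (∫⁻ y : Rd d, ENNReal.ofReal ((((G y).det)⁻¹ - (c ^ d)⁻¹) ^ 2))
          ≤ ENNReal.ofReal (C * ε ^ 2 * (c ^ (2 * d + 1))⁻¹) := by
  refine ⟨360000, by norm_num, ?_⟩
  intro c hc ε hε G hmeas hae hint
  have hc0 : (0:ℝ) < c := by linarith
  set K : ℝ := 360000 / c ^ (2 * d + 2) with hK
  have hK0 : 0 ≤ K := by positivity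
  have hd1 : 1 ≤ d := by rcases hd with rfl | rfl <;> norm_num
  -- pointwise bound
  have pointwise : ∀ᵐ y : Rd d,
      ENNReal.ofReal ((((G y).det)⁻¹ - (c ^ d)⁻¹) ^ 2)
        ≤ ENNReal.ofReal K *
          ENNReal.ofReal (frob (G y - c • (1 : Matrix (Fin d) (Fin d) ℝ)) ^ 2) := by
    filter_upwards [hae] with y hy
    obtain ⟨hy1, hy2⟩ := hy
    have hdb : |(G y).det - c ^ d|
        ≤ 75 * c ^ (d - 1) * frob (G y - c • (1 : Matrix (Fin d) (Fin d) ℝ)) := by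
      rcases hd with rfl | rfl
      · exact det_bound2 c hc (G y) hy1
      · exact det_bound3 c hc (G y) hy1
    have hr := recip_sq d hd1 c (G y).det
      (frob (G y - c • (1 : Matrix (Fin d) (Fin d) ℝ))) hc (frob_nonneg' _) hy2 hdb
    calc ENNReal.ofReal ((((G y).det)⁻¹ - (c ^ d)⁻¹) ^ 2)
        ≤ ENNReal.ofReal (K * frob (G y - c • (1 : Matrix (Fin d) (Fin d) ℝ)) ^ 2) :=
          ENNReal.ofReal_le_ofReal hr
      _ = ENNReal.ofReal K *
          ENNReal.ofReal (frob (G y - c • (1 : Matrix (Fin d) (Fin d) ℝ)) ^ 2) :=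
          ENNReal.ofReal_mul hK0
  calc (∫⁻ y : Rd d, ENNReal.ofReal ((((G y).det)⁻¹ - (c ^ d)⁻¹) ^ 2))
      ≤ ∫⁻ y : Rd d, ENNReal.ofReal K *
          ENNReal.ofReal (frob (G y - c • (1 : Matrix (Fin d) (Fin d) ℝ)) ^ 2) :=
        lintegral_mono_ae pointwise
    _ = ENNReal.ofReal K * ∫⁻ y : Rd d,
          ENNReal.ofReal (frob (G y - c • (1 : Matrix (Fin d) (Fin d) ℝ)) ^ 2) :=
        lintegral_const_mul' _ _ ENNReal.ofReal_ne_top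
    _ ≤ ENNReal.ofReal K * ENNReal.ofReal (ε ^ 2 * c) := mul_le_mul_right hint _
    _ = ENNReal.ofReal (K * (ε ^ 2 * c)) := (ENNReal.ofReal_mul hK0).symm
    _ ≤ ENNReal.ofReal (360000 * ε ^ 2 * (c ^ (2 * d + 1))⁻¹) := by
        apply ENNReal.ofReal_le_ofReal
        apply le_of_eq
        have hcc : c ^ (2 * d + 2) = c ^ (2 * d + 1) * c := by rw [← pow_succ]
        rw [hK, hcc]
        have h1 : (0:ℝ) < c ^ (2*d+1) := by positivity
        field_simp
end
end
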